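/- arXiv:1309.0622 — 6 statements merged into one kernel-verified Lean document; each statement's English description precedes it below -/
import Mathlib

section
/- Let φ : [1,∞) → (0,∞) be concave, non-decreasing and differentiable with φ'(t) → 0 as t → ∞, let ε_b, ε_ν ∈ (0,1) and let M ≥ 0. Then: (a) H_φ(t) → ∞ as t → ∞, so H_φ^{-1} is defined on all of [0,∞); (b) δ_k = ε_b φ'(H_φ^{-1}(ε_b k)) → 0 as k → ∞; and (c) the series c_* = Σ_{j=1}^∞ (1 − ε_ν)^{j−1} ∏_{k=1}^{j−1} (1 + δ_k M) converges (c_* < ∞). -/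
open MeasureTheory ProbabilityTheory Filter Set Topology

noncomputable def iterKernel {X : Type*} [MeasurableSpace X]
    (P : ℕ → Kernel X X) : ℕ → Kernel X X
  | 0 => Kernel.id
  | n + 1 => (P (n + 1)).comp (iterKernel P n)

noncomputable def Hfun (φ : ℝ → ℝ) (t : ℝ) : ℝ := ∫ s in (1:ℝ)..t, (φ s)⁻¹

noncomputable def Hinv (φ : ℝ → ℝ) : ℝ → ℝ := Function.invFunOn (Hfun φ) (Set.Ici 1)

noncomputable def rate (φ : ℝ → ℝ) (εb : ℝ) (n : ℕ) : ℝ := φ (Hinv φ (εb * n)) / φ 1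

noncomputable def deltaSeq (φ : ℝ → ℝ) (εb : ℝ) (k : ℕ) : ℝ := εb * deriv φ (Hinv φ (εb * k))

noncomputable def bbar (φ : ℝ → ℝ) (εb bV : ℝ) : ℝ := 2 * bV + εb * φ 1

noncomputable def Mone (φ : ℝ → ℝ) (εb εν bV cV : ℝ) : ℝ :=
  rate φ εb 1 * (1 + 2 * rate φ εb 1 / (εb * φ 1) * ((bV + cV) / (1 - εν) - 1))

noncomputable def cstar (φ : ℝ → ℝ) (εb εν bV cV : ℝ) : ℝ :=
  ∑' j : ℕ, (1 - εν) ^ j * ∏ k ∈ Finset.Icc 1 j, (1 + deltaSeq φ εb k * Mone φ εb εν bV cV)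

noncomputable def cconst (φ : ℝ → ℝ) (εb εν bV cV : ℝ) : ℝ :=
  2 / (εb * φ 1) * (2 + bbar φ εb bV / εν +
    cstar φ εb εν bV cV * bbar φ εb bV * rate φ εb 1 * (1 + rate φ εb 1 / (εb * φ 1)))

noncomputable def Qmeas {X : Type*} [MeasurableSpace X]
    (P : ℕ → Kernel X X) (ν : ℕ → Measure X) (εν : ℝ) (k : ℕ) (x : X) : Measure X :=
  (ENNReal.ofReal (1 - εν))⁻¹ • (P k x - ENNReal.ofReal εν • ν k)

/-!
Concavity keeps φ below its tangent line at 1, so φ(s) ≤ C s and H_φ(t) ≥ C⁻¹ log t → ∞.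
As H_φ is continuous and nondecreasing on [1, ∞), it takes every value y ≥ H_φ(1) = 0, and
H_φ⁻¹(y) exceeds any x once y > H_φ(x); hence H_φ⁻¹ → ∞ and δ_k → 0 because φ' → 0.
The terms of c_* then have ratio (1 - ε_ν)(1 + δ_{j+1} M) → 1 - ε_ν < 1.
-/

theorem ConcaveOn.exists_le_mul_of_differentiableAt {f : ℝ → ℝ}
    (hf : ConcaveOn ℝ (Ici 1) f) (hd : DifferentiableAt ℝ f 1) :
    ∃ C, ∀ s, 1 ≤ s → f s ≤ C * s := by
  refine ⟨|f 1| + |deriv f 1|, fun s hs => ?_⟩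
  have htangent : f s ≤ f 1 + deriv f 1 * (s - 1) := by
    rcases hs.eq_or_lt with rfl | hs
    · simp
    have hslope := hf.slope_le_deriv self_mem_Ici hs.le hs hd
    rw [slope_def_field, div_le_iff₀ (sub_pos.2 hs)] at hslope
    linarith
  nlinarith [le_abs_self (f 1), le_abs_self (deriv f 1), abs_nonneg (f 1), abs_nonneg (deriv f 1)]

theorem tendsto_integral_inv_atTop_of_le_mul {f : ℝ → ℝ} {C : ℝ}
    (hcont : ContinuousOn f (Ici 1)) (hpos : ∀ s, 1 ≤ s → 0 < f s)
    (hle : ∀ s, 1 ≤ s → f s ≤ C * s) :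
    Tendsto (fun t => ∫ s in (1:ℝ)..t, (f s)⁻¹) atTop atTop := by
  have hC : 0 < C := by simpa using (hpos 1 le_rfl).trans_le (hle 1 le_rfl)
  refine tendsto_atTop_mono' atTop ?_
    (Real.tendsto_log_atTop.const_mul_atTop (inv_pos.2 hC))
  filter_upwards [eventually_ge_atTop 1] with t ht
  calc C⁻¹ * Real.log t = ∫ s in (1:ℝ)..t, (C * s)⁻¹ := by
        simp_rw [mul_inv]
        rw [intervalIntegral.integral_const_mul, integral_inv_of_pos one_pos (by linarith), div_one]
    _ ≤ ∫ s in (1:ℝ)..t, (f s)⁻¹ := by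
        refine intervalIntegral.integral_mono_on ht ?_ ?_ fun s hs =>
          inv_anti₀ (hpos s hs.1) (hle s hs.1)
        · refine ContinuousOn.intervalIntegrable ?_
          rw [uIcc_of_le ht]
          exact (continuousOn_const.mul continuousOn_id).inv₀ fun s hs =>
            (mul_pos hC (zero_lt_one.trans_le hs.1)).ne'
        · refine ContinuousOn.intervalIntegrable ?_
          rw [uIcc_of_le ht]
          exact (hcont.mono Icc_subset_Ici_self).inv₀ fun s hs => (hpos s hs.1).ne'

theorem continuousOn_primitive_Ici {f : ℝ → ℝ} {a : ℝ} (hf : ContinuousOn f (Ici a)) :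
    ContinuousOn (fun x => ∫ t in a..x, f t) (Ici a) := by
  intro x hx
  have hcont : ContinuousOn (fun x => ∫ t in a..x, f t) (Icc a (x + 1)) := by
    have hint : IntegrableOn f (uIcc a (x + 1)) := by
      rw [uIcc_of_le (by linarith [mem_Ici.1 hx])]
      exact (hf.mono Icc_subset_Ici_self).integrableOn_compact isCompact_Icc
    simpa [uIcc_of_le (by linarith [mem_Ici.1 hx] : a ≤ x + 1)] using
      intervalIntegral.continuousOn_primitive_interval hint
  refine (hcont x ⟨hx, by linarith⟩).mono_of_mem_nhdsWithin ?_
  rw [← Ici_inter_Iic]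
  exact inter_mem_nhdsWithin _ (Iic_mem_nhds (by linarith))

theorem monotoneOn_primitive_Ici {f : ℝ → ℝ} {a : ℝ} (hf : ContinuousOn f (Ici a))
    (hnonneg : ∀ s, a ≤ s → 0 ≤ f s) :
    MonotoneOn (fun x => ∫ t in a..x, f t) (Ici a) := by
  intro x hx y _ hxy
  refine intervalIntegral.integral_mono_interval le_rfl hx hxy ?_ ?_
  · exact (ae_restrict_mem measurableSet_Ioc).mono fun s hs => hnonneg s hs.1.le
  · refine ContinuousOn.intervalIntegrable ?_
    rw [uIcc_of_le (le_trans hx hxy)]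
    exact hf.mono Icc_subset_Ici_self

theorem tendsto_invFunOn_atTop {α β : Type*} [LinearOrder α] [Nonempty α] [LinearOrder β]
    [NoMaxOrder β] {f : α → β} {s : Set α} (hf : MonotoneOn f s)
    (hs : ∀ x, ∃ y ∈ s, x ≤ y) (hsurj : ∀ᶠ y in atTop, y ∈ f '' s) :
    Tendsto (Function.invFunOn f s) atTop atTop := by
  rw [tendsto_atTop]
  intro x
  obtain ⟨x', hx's, hxx'⟩ := hs x
  filter_upwards [hsurj, eventually_gt_atTop (f x')] with y hy hgt
  refine hxx'.trans (le_of_not_gt fun hlt => hgt.not_ge ?_)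
  calc y = f (Function.invFunOn f s y) := (Function.invFunOn_eq hy).symm
    _ ≤ f x' := hf (Function.invFunOn_mem hy) hx's hlt.le

theorem summable_pow_mul_prod_one_add {𝕜 : Type*} [NormedField 𝕜] [CompleteSpace 𝕜]
    {q : 𝕜} (hq : ‖q‖ < 1) {a : ℕ → 𝕜} (ha : Tendsto a atTop (𝓝 0)) :
    Summable fun j => q ^ j * ∏ k ∈ Finset.Icc 1 j, (1 + a k) := by
  obtain ⟨r, hqr, hr1⟩ := exists_between hq
  have hratio : Tendsto (fun n => ‖q‖ * ‖1 + a (n + 1)‖) atTop (𝓝 ‖q‖) := by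
    simpa using ((ha.comp (tendsto_add_atTop_nat 1)).const_add 1).norm.const_mul ‖q‖
  refine summable_of_ratio_norm_eventually_le hr1 ?_
  filter_upwards [hratio.eventually (gt_mem_nhds hqr)] with n hn
  rw [Finset.prod_Icc_succ_top (Nat.le_add_left 1 n), pow_succ]
  calc ‖q ^ n * q * ((∏ k ∈ Finset.Icc 1 n, (1 + a k)) * (1 + a (n + 1)))‖
      = ‖q‖ * ‖1 + a (n + 1)‖ * ‖q ^ n * ∏ k ∈ Finset.Icc 1 n, (1 + a k)‖ := by
        simp only [norm_mul]; ring
    _ ≤ r * ‖q ^ n * ∏ k ∈ Finset.Icc 1 n, (1 + a k)‖ :=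
        mul_le_mul_of_nonneg_right hn.le (norm_nonneg _)

section

variable {φ : ℝ → ℝ} (hdiff : ∀ t, 1 ≤ t → DifferentiableAt ℝ φ t) (hpos : ∀ t, 1 ≤ t → 0 < φ t)
include hdiff hpos

theorem continuousOn_inv_Ici_one : ContinuousOn (fun s => (φ s)⁻¹) (Ici 1) :=
  ContinuousOn.inv₀ (fun t ht => (hdiff t ht).continuousAt.continuousWithinAt)
    fun t ht => (hpos t ht).ne'

theorem tendsto_Hfun_atTop (hconc : ConcaveOn ℝ (Ici 1) φ) : Tendsto (Hfun φ) atTop atTop := by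
  obtain ⟨C, hC⟩ := hconc.exists_le_mul_of_differentiableAt (hdiff 1 le_rfl)
  exact tendsto_integral_inv_atTop_of_le_mul
    (fun t ht => (hdiff t ht).continuousAt.continuousWithinAt) hpos hC

theorem tendsto_Hinv_atTop (hconc : ConcaveOn ℝ (Ici 1) φ) : Tendsto (Hinv φ) atTop atTop := by
  have hcont := continuousOn_inv_Ici_one hdiff hpos
  have hsurj : Ici (Hfun φ 1) ⊆ Hfun φ '' Ici 1 :=
    intermediate_value_Ici (continuousOn_primitive_Ici hcont) (tendsto_Hfun_atTop hdiff hpos hconc)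
  exact tendsto_invFunOn_atTop
    (monotoneOn_primitive_Ici hcont fun s hs => (inv_pos.2 (hpos s hs)).le)
    (fun x => ⟨max x 1, le_max_right x 1, le_max_left x 1⟩)
    (mem_of_superset (Ici_mem_atTop _) hsurj)

theorem tendsto_deltaSeq_zero (hconc : ConcaveOn ℝ (Ici 1) φ)
    (hderiv : Tendsto (deriv φ) atTop (𝓝 0)) {εb : ℝ} (hεb : 0 < εb) :
    Tendsto (deltaSeq φ εb) atTop (𝓝 0) := by
  have harg : Tendsto (fun k : ℕ => εb * k) atTop atTop :=
    tendsto_natCast_atTop_atTop.const_mul_atTop hεb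
  have := (hderiv.comp ((tendsto_Hinv_atTop hdiff hpos hconc).comp harg)).const_mul εb
  rwa [mul_zero] at this

end

theorem statement1_general (φ : ℝ → ℝ)
    (hφconc : ConcaveOn ℝ (Set.Ici 1) φ)
    (hφdiff : ∀ t, 1 ≤ t → DifferentiableAt ℝ φ t)
    (hφpos : ∀ t, 1 ≤ t → 0 < φ t)
    (hφderiv0 : Tendsto (deriv φ) atTop (nhds 0))
    (εb εν : ℝ) (hεb : εb ∈ Set.Ioo (0:ℝ) 1) (hεν : εν ∈ Set.Ioo (0:ℝ) 1)
    (M : ℝ) :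
    Tendsto (Hfun φ) atTop atTop ∧
    Tendsto (fun k : ℕ => deltaSeq φ εb k) atTop (nhds 0) ∧
    Summable (fun j : ℕ =>
      (1 - εν) ^ j * ∏ k ∈ Finset.Icc 1 j, (1 + deltaSeq φ εb k * M)) := by
  have hδ := tendsto_deltaSeq_zero hφdiff hφpos hφconc hφderiv0 hεb.1
  refine ⟨tendsto_Hfun_atTop hφdiff hφpos hφconc, hδ,
    summable_pow_mul_prod_one_add ?_ (by simpa using hδ.mul_const M)⟩
  rw [Real.norm_eq_abs, abs_lt]
  constructor <;> linarith [hεν.1, hεν.2]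

/-- Remark 2.4(i): the rate ingredients are well behaved: `H_φ(t) → ∞`
(so `H_φ⁻¹` is defined on `[0,∞)`), `δ_k → 0`, and the series `c_*` converges. -/
theorem statement1 (φ : ℝ → ℝ)
    (hφconc : ConcaveOn ℝ (Set.Ici 1) φ)
    (hφmono : MonotoneOn φ (Set.Ici 1))
    (hφdiff : ∀ t, 1 ≤ t → DifferentiableAt ℝ φ t)
    (hφpos : ∀ t, 1 ≤ t → 0 < φ t)
    (hφderiv0 : Tendsto (deriv φ) atTop (nhds 0))
    (εb εν : ℝ) (hεb : εb ∈ Set.Ioo (0:ℝ) 1) (hεν : εν ∈ Set.Ioo (0:ℝ) 1)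
    (M : ℝ) (hM : 0 ≤ M) :
    Tendsto (Hfun φ) atTop atTop ∧
    Tendsto (fun k : ℕ => deltaSeq φ εb k) atTop (nhds 0) ∧
    Summable (fun j : ℕ =>
      (1 - εν) ^ j * ∏ k ∈ Finset.Icc 1 j, (1 + deltaSeq φ εb k * M)) :=
  statement1_general φ hφconc hφdiff hφpos hφderiv0 εb εν hεb hεν M
end

section
/- Assume Condition (P). Then for any sequence (P_k)_{k≥1} ⊂ 𝓟 and any λ ∈ [0,1), Condition (D) holds for (P_k)_{k≥1} with the choices V(x) = V̂(x)^{1−λα}, φ(v) = (1−λα) β v^{α_λ} where α_λ = α(1−λ)/(1−λα), and with small set A_{V̂}(c_V) = {x : V̂(x) ≤ c_V}, for some constants ε_b, ε_ν ∈ (0,1) and b_V, c_V < ∞ whose values depend only on λ and on the constants and the function V̂ in Condition (P). -/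
/-!
The function `t ↦ t ^ γ` with `γ = 1 - λα ∈ (0, 1]` is concave, so its tangent line at any
`u > 0` dominates it. Integrating the tangent inequality against `P x` turns the drift
`P V̂ ≤ V̂ - β V̂^α` into `P V̂^γ ≤ V̂^γ - γ β V̂^(γ - 1 + α)`, and `γ - 1 + α = γ α_λ`, so the
decrement is `φ(V̂^γ)`. On `C` the tangent at `u = b` gives `P V̂^γ ≤ b^γ`. Enlarging `C` to a
level set of `V̂` on which `φ(V)` dominates `2 b_V` gives `ε_b = 1/2`, and that level set is
uniformly small by assumption.
-/

open MeasureTheory ProbabilityTheory Filter Set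

open Topology

namespace Real

lemma rpow_le_tangent {a u γ : ℝ} (ha : 0 ≤ a) (hu : 0 < u) (hγ₀ : 0 ≤ γ) (hγ₁ : γ ≤ 1) :
    a ^ γ ≤ u ^ γ + γ * u ^ (γ - 1) * (a - u) := by
  have bernoulli : (a / u) ^ γ ≤ 1 + γ * (a / u - 1) := by
    simpa using rpow_one_add_le_one_add_mul_self
      (show -1 ≤ a / u - 1 by linarith [div_nonneg ha hu.le]) hγ₀ hγ₁
  calc a ^ γ = u ^ γ * (a / u) ^ γ := by
        rw [← mul_rpow hu.le (div_nonneg ha hu.le), mul_div_cancel₀ _ hu.ne']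
    _ ≤ u ^ γ * (1 + γ * (a / u - 1)) := by gcongr
    _ = u ^ γ + γ * u ^ (γ - 1) * (a - u) := by
        rw [rpow_sub hu, rpow_one]
        field_simp

lemma concaveOn_const_mul_rpow {c p : ℝ} (hc : 0 ≤ c) (hp₀ : 0 ≤ p) (hp₁ : p ≤ 1) :
    ConcaveOn ℝ (Ici 1) (fun v : ℝ => c * v ^ p) :=
  ((concaveOn_rpow hp₀ hp₁).smul hc).subset (Ici_subset_Ici.mpr zero_le_one) (convex_Ici 1)

lemma monotoneOn_const_mul_rpow {c p : ℝ} (hc : 0 ≤ c) (hp : 0 ≤ p) :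
    MonotoneOn (fun v : ℝ => c * v ^ p) (Ici 1) :=
  fun _ ha _ _ hab => mul_le_mul_of_nonneg_left
    (rpow_le_rpow (zero_le_one.trans ha) hab hp) hc

lemma tendsto_deriv_const_mul_rpow_atTop (c : ℝ) {p : ℝ} (hp : p < 1) :
    Tendsto (deriv fun v : ℝ => c * v ^ p) atTop (𝓝 0) := by
  have decay : Tendsto (fun t : ℝ => c * p * t ^ (p - 1)) atTop (𝓝 0) := by
    simpa [neg_sub] using (tendsto_rpow_neg_atTop (sub_pos.mpr hp)).const_mul (c * p)
  refine decay.congr' ?_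
  filter_upwards [eventually_gt_atTop 0] with t ht
  rw [deriv_const_mul _ (differentiableAt_rpow_const_of_ne p ht.ne'), deriv_rpow_const, mul_assoc]

lemma le_mul_rpow_of_rpow_one_div_le {a b q t : ℝ} (ha : 0 < a) (hb : 0 ≤ b) (hq : 0 < q)
    (ht : (b / a) ^ (1 / q) ≤ t) : b ≤ a * t ^ q := by
  have hba : b / a ≤ t ^ q := by
    calc b / a = ((b / a) ^ (1 / q)) ^ q := by
          rw [← rpow_mul (div_nonneg hb ha.le), one_div_mul_cancel hq.ne', rpow_one]
      _ ≤ t ^ q := by gcongr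
  rwa [div_le_iff₀' ha] at hba

end Real

lemma drift_exponents {α lam : ℝ} (hα : α ∈ Ioo 0 1) (hlam : lam ∈ Ico 0 1) :
    0 < 1 - lam * α ∧ 1 - lam * α ≤ 1 ∧ 0 < α * (1 - lam) / (1 - lam * α) ∧
      α * (1 - lam) / (1 - lam * α) < 1 ∧
      (1 - lam * α) * (α * (1 - lam) / (1 - lam * α)) = 1 - lam * α - 1 + α := by
  obtain ⟨hα₀, hα₁⟩ := hα
  obtain ⟨hlam₀, hlam₁⟩ := hlam
  have hγ : 0 < 1 - lam * α := by nlinarith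
  refine ⟨hγ, by nlinarith, div_pos (by nlinarith) hγ, (div_lt_one hγ).mpr (by nlinarith), ?_⟩
  rw [mul_div_cancel₀ _ hγ.ne']
  ring

section Drift

variable {X : Type*} [MeasurableSpace X] {V : X → ℝ} {γ : ℝ}

lemma integrable_rpow_of_one_le {μ : Measure X} (hV : Measurable V) (hV₁ : ∀ x, 1 ≤ V x)
    (hint : Integrable V μ) (hγ₀ : 0 ≤ γ) (hγ₁ : γ ≤ 1) :
    Integrable (fun y => V y ^ γ) μ := by
  refine hint.mono' ((Real.continuous_rpow_const hγ₀).measurable.comp hV).aestronglyMeasurable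
    (Eventually.of_forall fun y => ?_)
  rw [Real.norm_of_nonneg (Real.rpow_nonneg (zero_le_one.trans (hV₁ y)) γ)]
  simpa using Real.rpow_le_rpow_of_exponent_le (hV₁ y) hγ₁

variable {μ : Measure X} [IsProbabilityMeasure μ]

lemma integral_rpow_le_tangent (hV : Measurable V) (hV₁ : ∀ x, 1 ≤ V x) (hint : Integrable V μ)
    {u : ℝ} (hu : 0 < u) (hγ₀ : 0 ≤ γ) (hγ₁ : γ ≤ 1) :
    ∫ y, V y ^ γ ∂μ ≤ u ^ γ + γ * u ^ (γ - 1) * ((∫ y, V y ∂μ) - u) := by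
  have hlin : Integrable (fun y => γ * u ^ (γ - 1) * (V y - u)) μ :=
    (hint.sub (integrable_const u)).const_mul _
  calc ∫ y, V y ^ γ ∂μ ≤ ∫ y, (u ^ γ + γ * u ^ (γ - 1) * (V y - u)) ∂μ :=
        integral_mono (integrable_rpow_of_one_le hV hV₁ hint hγ₀ hγ₁)
          ((integrable_const _).add hlin)
          fun y => Real.rpow_le_tangent (zero_le_one.trans (hV₁ y)) hu hγ₀ hγ₁
    _ = u ^ γ + γ * u ^ (γ - 1) * ((∫ y, V y ∂μ) - u) := by
        rw [integral_add (integrable_const _) hlin, integral_const_mul,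
          integral_sub hint (integrable_const u)]
        simp

lemma integral_rpow_le_rpow_of_integral_le (hV : Measurable V) (hV₁ : ∀ x, 1 ≤ V x)
    (hint : Integrable V μ) {b : ℝ} (hb : 0 < b) (hμ : ∫ y, V y ∂μ ≤ b)
    (hγ₀ : 0 ≤ γ) (hγ₁ : γ ≤ 1) :
    ∫ y, V y ^ γ ∂μ ≤ b ^ γ := by
  have hslope : 0 ≤ γ * b ^ (γ - 1) := mul_nonneg hγ₀ (Real.rpow_nonneg hb.le _)
  nlinarith [integral_rpow_le_tangent hV hV₁ hint hb hγ₀ hγ₁]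

lemma integral_rpow_le_sub_of_integral_le_sub (hV : Measurable V) (hV₁ : ∀ x, 1 ≤ V x)
    (hint : Integrable V μ) {v β α : ℝ} (hv : 0 < v) (hμ : ∫ y, V y ∂μ ≤ v - β * v ^ α)
    (hγ₀ : 0 ≤ γ) (hγ₁ : γ ≤ 1) :
    ∫ y, V y ^ γ ∂μ ≤ v ^ γ - γ * β * v ^ (γ - 1 + α) := by
  have hslope : 0 ≤ γ * v ^ (γ - 1) := mul_nonneg hγ₀ (Real.rpow_nonneg hv.le _)
  have hdecrease := mul_le_mul_of_nonneg_left (show (∫ y, V y ∂μ) - v ≤ -(β * v ^ α) by linarith)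
    hslope
  rw [Real.rpow_add hv]
  linarith [integral_rpow_le_tangent hV hV₁ hint hv hγ₀ hγ₁]

lemma integral_rpow_le_drift (P : Kernel X X) [IsMarkovKernel P] (hV : Measurable V)
    (hV₁ : ∀ x, 1 ≤ V x) (hint : ∀ x, Integrable V (P x)) {C S : Set X} (hCS : C ⊆ S)
    {β α b M : ℝ} (hβ : 0 < β) (hb : 0 < b) (hM : 0 ≤ M) (hCM : ∀ x ∈ C, V x ≤ M)
    (hout : ∀ x ∉ C, ∫ y, V y ∂(P x) ≤ V x - β * V x ^ α) (hin : ∀ x ∈ C, ∫ y, V y ∂(P x) ≤ b)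
    {p : ℝ} (hp : 0 ≤ p) (hγ₀ : 0 ≤ γ) (hγ₁ : γ ≤ 1) (hγp : γ * p = γ - 1 + α) (x : X) :
    ∫ y, V y ^ γ ∂(P x) ≤ V x ^ γ - γ * β * (V x ^ γ) ^ p
      + (b ^ γ + γ * β * M ^ (γ * p)) * S.indicator 1 x := by
  have hVx : 0 ≤ V x := zero_le_one.trans (hV₁ x)
  have hrate : 0 ≤ γ * β := mul_nonneg hγ₀ hβ.le
  rw [← Real.rpow_mul hVx]
  by_cases hxC : x ∈ C
  · have hdec : γ * β * V x ^ (γ * p) ≤ γ * β * M ^ (γ * p) := by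
      gcongr
      · exact hCM x hxC
    rw [indicator_of_mem (hCS hxC), Pi.one_apply, mul_one]
    nlinarith [integral_rpow_le_rpow_of_integral_le hV hV₁ (hint x) hb (hin x hxC) hγ₀ hγ₁,
      Real.rpow_nonneg hVx γ]
  · have hbV : 0 ≤ b ^ γ + γ * β * M ^ (γ * p) :=
      add_nonneg (Real.rpow_nonneg hb.le γ) (mul_nonneg hrate (Real.rpow_nonneg hM _))
    have hind : 0 ≤ S.indicator (1 : X → ℝ) x := indicator_nonneg (fun _ _ => zero_le_one) x
    rw [hγp] at hbV ⊢
    nlinarith [mul_nonneg hbV hind, integral_rpow_le_sub_of_integral_le_sub hV hV₁ (hint x)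
      (zero_lt_one.trans_le (hV₁ x)) (hout x hxC) hγ₀ hγ₁]

end Drift

theorem statement5_general {X : Type*} [MeasurableSpace X]
    (PP : Set (Kernel X X)) (hPP : ∀ P ∈ PP, IsMarkovKernel P)
    (C : Set X)
    (Vh : X → ℝ) (hVh : Measurable Vh) (hVh1 : ∀ x, 1 ≤ Vh x)
    (cVh : ℝ) (hcVh : ∀ x ∈ C, Vh x ≤ cVh)
    (β : ℝ) (hβ : 0 < β) (α : ℝ) (hα : α ∈ Set.Ioo (0:ℝ) 1) (bVh : ℝ)
    (hint : ∀ P ∈ PP, ∀ x : X, Integrable Vh (P x))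
    (hdriftout : ∀ P ∈ PP, ∀ x ∉ C, ∫ y, Vh y ∂(P x) ≤ Vh x - β * Vh x ^ α)
    (hdriftin : ∀ P ∈ PP, ∀ x ∈ C, ∫ y, Vh y ∂(P x) ≤ bVh)
    (hsmall : ∀ v : ℝ, ∃ εv : ℝ, 0 < εv ∧ ∃ νP : Kernel X X → Measure X,
      (∀ P ∈ PP, IsProbabilityMeasure (νP P)) ∧
      ∀ P ∈ PP, ∀ x : X, Vh x ≤ v → ∀ A : Set X, MeasurableSet A →
        ENNReal.ofReal εv * νP P A ≤ P x A)
    (lam : ℝ) (hlam : lam ∈ Set.Ico (0:ℝ) 1) :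
    ∃ εb εν : ℝ, εb ∈ Set.Ioo (0:ℝ) 1 ∧ εν ∈ Set.Ioo (0:ℝ) 1 ∧
    ∃ bV cV : ℝ,
    ∀ P : ℕ → Kernel X X, (∀ k, 1 ≤ k → P k ∈ PP) →
    ∃ ν : ℕ → Measure X, (∀ k, IsProbabilityMeasure (ν k)) ∧
      -- Condition (D) for V = V̂^{1-λα}, φ(v) = (1-λα) β v^{α_λ}, C = {x | V̂ x ≤ c_V}:
      (Measurable fun x => Vh x ^ (1 - lam * α)) ∧
      (∀ x, 1 ≤ Vh x ^ (1 - lam * α)) ∧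
      ConcaveOn ℝ (Set.Ici 1)
        (fun v : ℝ => (1 - lam * α) * β * v ^ (α * (1 - lam) / (1 - lam * α))) ∧
      MonotoneOn
        (fun v : ℝ => (1 - lam * α) * β * v ^ (α * (1 - lam) / (1 - lam * α)))
        (Set.Ici 1) ∧
      (∀ t : ℝ, 1 ≤ t → DifferentiableAt ℝ
        (fun v : ℝ => (1 - lam * α) * β * v ^ (α * (1 - lam) / (1 - lam * α))) t) ∧
      (∀ t : ℝ, 1 ≤ t →
        0 < (1 - lam * α) * β * t ^ (α * (1 - lam) / (1 - lam * α))) ∧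
      Tendsto (deriv
        (fun v : ℝ => (1 - lam * α) * β * v ^ (α * (1 - lam) / (1 - lam * α))))
        atTop (nhds 0) ∧
      (∀ k, 1 ≤ k → ∀ x : X, Integrable (fun y => Vh y ^ (1 - lam * α)) (P k x)) ∧
      (∀ k, 1 ≤ k → ∀ x : X,
        ∫ y, Vh y ^ (1 - lam * α) ∂(P k x) ≤
          Vh x ^ (1 - lam * α)
            - (1 - lam * α) * β * (Vh x ^ (1 - lam * α)) ^ (α * (1 - lam) / (1 - lam * α))
            + bV * Set.indicator {x : X | Vh x ≤ cV} 1 x) ∧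
      (∀ k, 1 ≤ k → ∀ x : X, Vh x ≤ cV → ∀ A : Set X, MeasurableSet A →
        ENNReal.ofReal εν * ν k A ≤ P k x A) ∧
      (∀ x : X, ¬ Vh x ≤ cV →
        bV / (1 - εb) ≤
          (1 - lam * α) * β * (Vh x ^ (1 - lam * α)) ^ (α * (1 - lam) / (1 - lam * α))) ∧
      (∀ x : X, Vh x ≤ cV → Vh x ^ (1 - lam * α) ≤ cV) := by
  obtain ⟨hγ₀, hγ₁, hp₀, hp₁, hγp⟩ := drift_exponents hα hlam
  set γ := 1 - lam * α
  set p := α * (1 - lam) / (1 - lam * α)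
  have hrate : 0 < γ * β := mul_pos hγ₀ hβ
  set M := max cVh 0
  set bV := max bVh 1 ^ γ + γ * β * M ^ (γ * p)
  set cV := max M ((2 * bV / (γ * β)) ^ (1 / (γ * p)))
  have hMcV : M ≤ cV := le_max_left _ _
  obtain ⟨ε, hε, νP, hνP, hminor⟩ := hsmall cV
  refine ⟨1 / 2, min ε (1 / 2), by norm_num, ⟨lt_min hε (by norm_num), by norm_num⟩, bV, cV,
    fun P hP => ⟨fun k => νP (P (max k 1)), fun k => hνP _ (hP _ (le_max_right _ _)),
    (Real.continuous_rpow_const hγ₀.le).measurable.comp hVh,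
    fun x => Real.one_le_rpow (hVh1 x) hγ₀.le,
    Real.concaveOn_const_mul_rpow hrate.le hp₀.le hp₁.le,
    Real.monotoneOn_const_mul_rpow hrate.le hp₀.le,
    fun t ht => (Real.differentiableAt_rpow_const_of_ne p (by positivity)).const_mul _,
    fun t ht => by positivity,
    Real.tendsto_deriv_const_mul_rpow_atTop _ hp₁,
    fun k hk x => integrable_rpow_of_one_le hVh hVh1 (hint _ (hP k hk) x) hγ₀.le hγ₁,
    fun k hk x => ?drift, fun k hk x hx A hA => ?minorization, fun x hx => ?outside,
    fun x hx => (Real.rpow_le_self_of_one_le (hVh1 x) hγ₁).trans hx⟩⟩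
  case drift =>
    have := hPP _ (hP k hk)
    exact integral_rpow_le_drift (P k) hVh hVh1 (hint _ (hP k hk))
      (fun y hy => (hcVh y hy).trans ((le_max_left _ _).trans hMcV)) hβ
      (zero_lt_one.trans_le (le_max_right _ _)) (le_max_right _ _)
      (fun y hy => (hcVh y hy).trans (le_max_left _ _)) (hdriftout _ (hP k hk))
      (fun y hy => (hdriftin _ (hP k hk) y hy).trans (le_max_left _ _)) hp₀.le hγ₀.le hγ₁ hγp x
  case minorization =>
    dsimp only
    rw [max_eq_left hk]
    exact (mul_le_mul_left (ENNReal.ofReal_le_ofReal (min_le_left _ _)) _).trans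
      (hminor _ (hP k hk) x hx A hA)
  case outside =>
    rw [← Real.rpow_mul (zero_le_one.trans (hVh1 x)), show bV / (1 - 1 / 2) = 2 * bV by ring]
    exact Real.le_mul_rpow_of_rpow_one_div_le hrate (by positivity) (mul_pos hγ₀ hp₀)
      ((le_max_right _ _).trans (not_le.mp hx).le)

/-- Proposition 3.3: Condition (P) implies Condition (D) for `V = V̂^{1-λα}` and
`φ(v) = (1-λα) β v^{α_λ}`, with small set `{x | V̂ x ≤ c_V}`. -/
theorem statement5 {X : Type*} [MeasurableSpace X]
    (PP : Set (Kernel X X)) (hPP : ∀ P ∈ PP, IsMarkovKernel P)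
    (C : Set X) (hC : MeasurableSet C)
    (Vh : X → ℝ) (hVh : Measurable Vh) (hVh1 : ∀ x, 1 ≤ Vh x)
    (cVh : ℝ) (hcVh : ∀ x ∈ C, Vh x ≤ cVh)
    (β : ℝ) (hβ : 0 < β) (α : ℝ) (hα : α ∈ Set.Ioo (0:ℝ) 1) (bVh : ℝ)
    (hint : ∀ P ∈ PP, ∀ x : X, Integrable Vh (P x))
    (hdriftout : ∀ P ∈ PP, ∀ x ∉ C, ∫ y, Vh y ∂(P x) ≤ Vh x - β * Vh x ^ α)
    (hdriftin : ∀ P ∈ PP, ∀ x ∈ C, ∫ y, Vh y ∂(P x) ≤ bVh)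
    (hsmall : ∀ v : ℝ, ∃ εv : ℝ, 0 < εv ∧ ∃ νP : Kernel X X → Measure X,
      (∀ P ∈ PP, IsProbabilityMeasure (νP P)) ∧
      ∀ P ∈ PP, ∀ x : X, Vh x ≤ v → ∀ A : Set X, MeasurableSet A →
        ENNReal.ofReal εv * νP P A ≤ P x A)
    (lam : ℝ) (hlam : lam ∈ Set.Ico (0:ℝ) 1) :
    ∃ εb εν : ℝ, εb ∈ Set.Ioo (0:ℝ) 1 ∧ εν ∈ Set.Ioo (0:ℝ) 1 ∧
    ∃ bV cV : ℝ,
    ∀ P : ℕ → Kernel X X, (∀ k, 1 ≤ k → P k ∈ PP) →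
    ∃ ν : ℕ → Measure X, (∀ k, IsProbabilityMeasure (ν k)) ∧
      -- Condition (D) for V = V̂^{1-λα}, φ(v) = (1-λα) β v^{α_λ}, C = {x | V̂ x ≤ c_V}:
      (Measurable fun x => Vh x ^ (1 - lam * α)) ∧
      (∀ x, 1 ≤ Vh x ^ (1 - lam * α)) ∧
      ConcaveOn ℝ (Set.Ici 1)
        (fun v : ℝ => (1 - lam * α) * β * v ^ (α * (1 - lam) / (1 - lam * α))) ∧
      MonotoneOn
        (fun v : ℝ => (1 - lam * α) * β * v ^ (α * (1 - lam) / (1 - lam * α)))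
        (Set.Ici 1) ∧
      (∀ t : ℝ, 1 ≤ t → DifferentiableAt ℝ
        (fun v : ℝ => (1 - lam * α) * β * v ^ (α * (1 - lam) / (1 - lam * α))) t) ∧
      (∀ t : ℝ, 1 ≤ t →
        0 < (1 - lam * α) * β * t ^ (α * (1 - lam) / (1 - lam * α))) ∧
      Tendsto (deriv
        (fun v : ℝ => (1 - lam * α) * β * v ^ (α * (1 - lam) / (1 - lam * α))))
        atTop (nhds 0) ∧
      (∀ k, 1 ≤ k → ∀ x : X, Integrable (fun y => Vh y ^ (1 - lam * α)) (P k x)) ∧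
      (∀ k, 1 ≤ k → ∀ x : X,
        ∫ y, Vh y ^ (1 - lam * α) ∂(P k x) ≤
          Vh x ^ (1 - lam * α)
            - (1 - lam * α) * β * (Vh x ^ (1 - lam * α)) ^ (α * (1 - lam) / (1 - lam * α))
            + bV * Set.indicator {x : X | Vh x ≤ cV} 1 x) ∧
      (∀ k, 1 ≤ k → ∀ x : X, Vh x ≤ cV → ∀ A : Set X, MeasurableSet A →
        ENNReal.ofReal εν * ν k A ≤ P k x A) ∧
      (∀ x : X, ¬ Vh x ≤ cV →
        bV / (1 - εb) ≤
          (1 - lam * α) * β * (Vh x ^ (1 - lam * α)) ^ (α * (1 - lam) / (1 - lam * α))) ∧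
      (∀ x : X, Vh x ≤ cV → Vh x ^ (1 - lam * α) ≤ cV) :=
  statement5_general PP hPP C Vh hVh hVh1 cVh hcVh β hβ α hα bVh hint hdriftout hdriftin hsmall lam
    hlam
end

section
/- Assume Condition (D). Then for all k ≥ 1 and all (x, x') ∉ C × C: P_k V(x) + P_k V(x') − 1 ≤ (V(x) + V(x') − 1) − ε_b φ(V(x) + V(x') − 1). -/
open MeasureTheory ProbabilityTheory Filter Set

/-!
Concavity of `φ` on `[1, ∞)` makes `φ (s + t - 1) ≤ φ s + φ t - φ 1 ≤ φ s + φ t`. Adding the two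
drift inequalities, the point outside `C` has `b_V ≤ (1 - ε_b) φ (V x)`, so the constant `b_V` that
the other point may contribute is absorbed, leaving a decrease of at least
`ε_b (φ (V x) + φ (V x')) ≥ ε_b φ (V x + V x' - 1)`.
-/

theorem ConcaveOn.map_add_sub_add_map_le {s : Set ℝ} {f : ℝ → ℝ} (hf : ConcaveOn ℝ s f)
    {a x y : ℝ} (ha : a ∈ s) (hb : x + y - a ∈ s) (hx : a ≤ x) (hy : a ≤ y) :
    f (x + y - a) + f a ≤ f x + f y := by
  rcases hx.eq_or_lt with rfl | hx
  · simp [add_comm]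
  have hd : 0 < x + y - 2 * a := by linarith
  -- `x` and `y` are the convex combinations of `a` and `x + y - a` with swapped weights.
  set θ := (y - a) / (x + y - 2 * a)
  have hθd : θ * (x + y - 2 * a) = y - a := div_mul_cancel₀ _ hd.ne'
  have hθ0 : 0 ≤ θ := div_nonneg (by linarith) hd.le
  have hθ1 : 0 ≤ 1 - θ := sub_nonneg.2 <| (div_le_one hd).2 (by linarith)
  clear_value θ
  have hfx := hf.2 ha hb hθ0 hθ1 (add_sub_cancel θ 1)
  have hfy := hf.2 ha hb hθ1 hθ0 (sub_add_cancel 1 θ)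
  rw [show θ • a + (1 - θ) • (x + y - a) = x by simp only [smul_eq_mul]; linear_combination -hθd]
    at hfx
  rw [show (1 - θ) • a + θ • (x + y - a) = y by simp only [smul_eq_mul]; linear_combination hθd]
    at hfy
  simp only [smul_eq_mul] at hfx hfy
  linarith

section BivariateDrift

variable {X : Type*} [MeasurableSpace X] {Q : Kernel X X} {C : Set X} {V : X → ℝ} {φ : ℝ → ℝ}
  {εb bV : ℝ}

theorem bivariate_drift_of_notMem (hV1 : ∀ x, 1 ≤ V x) (hφconc : ConcaveOn ℝ (Ici 1) φ)
    (hφpos : ∀ t, 1 ≤ t → 0 < φ t) (hεb0 : 0 ≤ εb) (hεb1 : εb < 1)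
    (hdrift : ∀ x, ∫ y, V y ∂(Q x) ≤ V x - φ (V x) + bV * C.indicator 1 x)
    (hout : ∀ x ∉ C, bV / (1 - εb) ≤ φ (V x)) (x x' : X) (hx : x ∉ C) :
    (∫ y, V y ∂(Q x)) + (∫ y, V y ∂(Q x')) - 1 ≤
      (V x + V x' - 1) - εb * φ (V x + V x' - 1) := by
  have hbV : bV ≤ (1 - εb) * φ (V x) := by
    have := hout x hx
    rwa [div_le_iff₀ (sub_pos.2 hεb1), mul_comm] at this
  have hbV' : bV * C.indicator 1 x' ≤ (1 - εb) * (φ (V x) + φ (V x')) := by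
    by_cases hx' : x' ∈ C
    · rw [indicator_of_mem hx', Pi.one_apply, mul_one]
      nlinarith [hφpos _ (hV1 x')]
    · rw [indicator_of_notMem hx', mul_zero]
      nlinarith [hφpos _ (hV1 x), hφpos _ (hV1 x')]
  have hφsum : φ (V x + V x' - 1) ≤ φ (V x) + φ (V x') := by
    have := hφconc.map_add_sub_add_map_le self_mem_Ici
      (show V x + V x' - 1 ∈ Ici 1 by simp only [mem_Ici]; linarith [hV1 x, hV1 x'])
      (hV1 x) (hV1 x')
    linarith [hφpos 1 le_rfl]
  calc (∫ y, V y ∂(Q x)) + (∫ y, V y ∂(Q x')) - 1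
      ≤ (V x - φ (V x)) + (V x' - φ (V x') + bV * C.indicator 1 x') - 1 := by
        have := hdrift x
        rw [indicator_of_notMem hx, mul_zero, add_zero] at this
        linarith [hdrift x']
    _ ≤ (V x + V x' - 1) - εb * (φ (V x) + φ (V x')) := by linarith
    _ ≤ (V x + V x' - 1) - εb * φ (V x + V x' - 1) := by gcongr

end BivariateDrift

theorem statement8_general {X : Type*} [MeasurableSpace X]
    (P : ℕ → Kernel X X)
    (C : Set X)
    (V : X → ℝ) (hV1 : ∀ x, 1 ≤ V x)
    (φ : ℝ → ℝ)
    (hφconc : ConcaveOn ℝ (Set.Ici 1) φ)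
    (hφpos : ∀ t, 1 ≤ t → 0 < φ t)
    (εb : ℝ) (hεb : εb ∈ Set.Ioo (0:ℝ) 1)
    (bV : ℝ)
    (hdrift : ∀ k, 1 ≤ k → ∀ x,
      ∫ y, V y ∂(P k x) ≤ V x - φ (V x) + bV * C.indicator 1 x)
    (hout : ∀ x ∉ C, bV / (1 - εb) ≤ φ (V x)) :
    ∀ k, 1 ≤ k → ∀ x x' : X, ¬(x ∈ C ∧ x' ∈ C) →
      (∫ y, V y ∂(P k x)) + (∫ y, V y ∂(P k x')) - 1 ≤
        (V x + V x' - 1) - εb * φ (V x + V x' - 1) := by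
  intro k hk x x' hxx'
  have drift := bivariate_drift_of_notMem hV1 hφconc hφpos hεb.1.le hεb.2 (hdrift k hk) hout
  rcases not_and_or.mp hxx' with hx | hx'
  · exact drift x x' hx
  · rw [add_comm (∫ y, V y ∂(P k x)), add_comm (V x)]
    exact drift x' x hx'

/-- Lemma 5.3 (i): bivariate drift outside `C × C`. -/
theorem statement8 {X : Type*} [MeasurableSpace X]
    (P : ℕ → Kernel X X) (hP : ∀ k, IsMarkovKernel (P k))
    (C : Set X) (hC : MeasurableSet C)
    (V : X → ℝ) (hVmeas : Measurable V) (hV1 : ∀ x, 1 ≤ V x)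
    (φ : ℝ → ℝ)
    (hφconc : ConcaveOn ℝ (Set.Ici 1) φ)
    (hφmono : MonotoneOn φ (Set.Ici 1))
    (hφdiff : ∀ t, 1 ≤ t → DifferentiableAt ℝ φ t)
    (hφpos : ∀ t, 1 ≤ t → 0 < φ t)
    (hφderiv0 : Tendsto (deriv φ) atTop (nhds 0))
    (ν : ℕ → Measure X) (hν : ∀ k, IsProbabilityMeasure (ν k))
    (εν εb : ℝ) (hεν : εν ∈ Set.Ioo (0:ℝ) 1) (hεb : εb ∈ Set.Ioo (0:ℝ) 1)
    (bV cV : ℝ)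
    (hVint : ∀ k, 1 ≤ k → ∀ x, Integrable V (P k x))
    (hdrift : ∀ k, 1 ≤ k → ∀ x,
      ∫ y, V y ∂(P k x) ≤ V x - φ (V x) + bV * C.indicator 1 x)
    (hminor : ∀ k, 1 ≤ k → ∀ x ∈ C, ∀ A : Set X, MeasurableSet A →
      ENNReal.ofReal εν * ν k A ≤ P k x A)
    (hout : ∀ x ∉ C, bV / (1 - εb) ≤ φ (V x))
    (hin : ∀ x ∈ C, V x ≤ cV) :
    ∀ k, 1 ≤ k → ∀ x x' : X, ¬(x ∈ C ∧ x' ∈ C) →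
      (∫ y, V y ∂(P k x)) + (∫ y, V y ∂(P k x')) - 1 ≤
        (V x + V x' - 1) - εb * φ (V x + V x' - 1) :=
  statement8_general P C V hV1 φ hφconc hφpos εb hεb bV hdrift hout
end

section
/- Assume Condition (D). Then for all k ≥ 1 and all (x, x') ∈ X²: P_k V(x) + P_k V(x') − 1 ≤ (V(x) + V(x') − 1) − ε_b φ(V(x) + V(x') − 1) + b̄ · 1_{C×C}(x, x'), where b̄ = 2b_V + ε_b φ(1). (Equivalently, the bivariate drift P̄_k V̄(x, x', 0) ≤ V̄(x, x') − ε_b φ(V̄(x, x')) + b̄ 1_{C̄}(x, x') holds for the coupling kernel applied to V̄(x, x') = V(x) + V(x') − 1 from flag 0.) -/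
open MeasureTheory ProbabilityTheory Filter Set

/-
Concavity of `φ` gives `φ(s + t - 1) + φ(1) ≤ φ(s) + φ(t)`, so the bivariate drift only loses
`ε_b φ(1)` against the sum of the two univariate ones. Off `C` the condition
`φ(V) ≥ b_V / (1 - ε_b)` means the unused part `(1 - ε_b) φ(V)` of the drift absorbs the `b_V`
contributed by the other coordinate, so the constant survives only on `C × C`.
-/

theorem ConcaveOn.add_sub_add_le {S : Set ℝ} {f : ℝ → ℝ} (hf : ConcaveOn ℝ S f) {a s t : ℝ}
    (ha : a ∈ S) (hm : s + t - a ∈ S) (hs : a ≤ s) (ht : a ≤ t) :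
    f (s + t - a) + f a ≤ f s + f t := by
  set m := s + t - a with hm_def
  rcases (show a ≤ m by linarith).eq_or_lt with hma | hma
  · obtain rfl : s = a := by linarith
    obtain rfl : t = s := by linarith
    rw [hm_def, add_sub_cancel_right]
  have hd : 0 < m - a := by linarith
  set lam := (s - a) / (m - a)
  set mu := (t - a) / (m - a)
  have hlam : 0 ≤ lam := div_nonneg (by linarith) hd.le
  have hmu : 0 ≤ mu := div_nonneg (by linarith) hd.le
  have hw : mu + lam = 1 := by
    simp only [mu, lam]; field_simp; ring
  have hs_eq : mu • a + lam • m = s := by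
    simp only [mu, lam, smul_eq_mul]; field_simp; ring
  have ht_eq : lam • a + mu • m = t := by
    simp only [mu, lam, smul_eq_mul]; field_simp; ring
  have hfs := hf.2 ha hm hmu hlam hw
  have hft := hf.2 ha hm hlam hmu (by rwa [add_comm])
  rw [hs_eq] at hfs
  rw [ht_eq] at hft
  simp only [smul_eq_mul] at hfs hft
  linear_combination hfs + hft - (f a + f m) * hw

section Drift

variable {X : Type*} {C : Set X} {V : X → ℝ} {φ : ℝ → ℝ} {εb bV p : ℝ} {x : X}

theorem le_sub_mul_add_of_drift_of_mem (hεb : εb ≤ 1) (hφ : 0 ≤ φ (V x)) (hx : x ∈ C)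
    (hp : p ≤ V x - φ (V x) + bV * C.indicator 1 x) :
    p ≤ V x - εb * φ (V x) + bV := by
  rw [indicator_of_mem hx, Pi.one_apply, mul_one] at hp
  linarith [mul_le_mul_of_nonneg_right hεb hφ]

theorem le_sub_mul_sub_max_of_drift_of_notMem (hεb : εb < 1) (hφ : 0 ≤ φ (V x)) (hx : x ∉ C)
    (hout : bV / (1 - εb) ≤ φ (V x)) (hp : p ≤ V x - φ (V x) + bV * C.indicator 1 x) :
    p ≤ V x - εb * φ (V x) - max bV 0 := by
  rw [indicator_of_notMem hx, mul_zero, add_zero] at hp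
  have hb : bV ≤ (1 - εb) * φ (V x) := by rwa [div_le_iff₀' (by linarith)] at hout
  rcases le_total bV 0 with hb0 | hb0
  · rw [max_eq_right hb0]; linarith [mul_le_mul_of_nonneg_right hεb.le hφ]
  · rw [max_eq_left hb0]; linarith

theorem add_le_of_drift_of_drift {x' : X} {p' : ℝ} (hεb : εb < 1)
    (hφ : ∀ y, 0 ≤ φ (V y)) (hout : ∀ y ∉ C, bV / (1 - εb) ≤ φ (V y))
    (hp : p ≤ V x - φ (V x) + bV * C.indicator 1 x)
    (hp' : p' ≤ V x' - φ (V x') + bV * C.indicator 1 x') :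
    p + p' ≤ (V x - εb * φ (V x)) + (V x' - εb * φ (V x')) +
      2 * bV * (C ×ˢ C).indicator 1 (x, x') := by
  rw [indicator_prod_one]
  by_cases hx : x ∈ C <;> by_cases hx' : x' ∈ C <;>
    simp only [indicator_of_mem, indicator_of_notMem, hx, hx', not_false_eq_true,
      Pi.one_apply, mul_one, mul_zero]
  · linarith [le_sub_mul_add_of_drift_of_mem hεb.le (hφ x) hx hp,
      le_sub_mul_add_of_drift_of_mem hεb.le (hφ x') hx' hp']
  · linarith [le_sub_mul_add_of_drift_of_mem hεb.le (hφ x) hx hp, le_max_left bV 0,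
      le_sub_mul_sub_max_of_drift_of_notMem hεb (hφ x') hx' (hout x' hx') hp']
  · linarith [le_sub_mul_sub_max_of_drift_of_notMem hεb (hφ x) hx (hout x hx) hp,
      le_sub_mul_add_of_drift_of_mem hεb.le (hφ x') hx' hp', le_max_left bV 0]
  · linarith [le_sub_mul_sub_max_of_drift_of_notMem hεb (hφ x) hx (hout x hx) hp,
      le_sub_mul_sub_max_of_drift_of_notMem hεb (hφ x') hx' (hout x' hx') hp', le_max_right bV 0]

end Drift

theorem statement10_general {X : Type*} [MeasurableSpace X]
    (P : ℕ → Kernel X X)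
    (C : Set X)
    (V : X → ℝ) (hV1 : ∀ x, 1 ≤ V x)
    (φ : ℝ → ℝ)
    (hφconc : ConcaveOn ℝ (Set.Ici 1) φ)
    (hφpos : ∀ t, 1 ≤ t → 0 < φ t)
    (εb : ℝ) (hεb : εb ∈ Set.Ioo (0:ℝ) 1)
    (bV : ℝ)
    (hdrift : ∀ k, 1 ≤ k → ∀ x,
      ∫ y, V y ∂(P k x) ≤ V x - φ (V x) + bV * C.indicator 1 x)
    (hout : ∀ x ∉ C, bV / (1 - εb) ≤ φ (V x)) :
    ∀ k, 1 ≤ k → ∀ x x' : X,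
      (∫ y, V y ∂(P k x)) + (∫ y, V y ∂(P k x')) - 1 ≤
        (V x + V x' - 1) - εb * φ (V x + V x' - 1) +
          bbar φ εb bV * Set.indicator (C ×ˢ C) 1 (x, x') := by
  intro k hk x x'
  obtain ⟨hεb0, hεb1⟩ := hεb
  have hφ1 : 0 < φ 1 := hφpos 1 le_rfl
  have hsub : φ (V x + V x' - 1) + φ 1 ≤ φ (V x) + φ (V x') :=
    hφconc.add_sub_add_le self_mem_Ici (by simp only [mem_Ici]; linarith [hV1 x, hV1 x'])
      (hV1 x) (hV1 x')
  have hpair := add_le_of_drift_of_drift hεb1 (fun y ↦ (hφpos _ (hV1 y)).le) hout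
    (hdrift k hk x) (hdrift k hk x')
  have hind : 0 ≤ (C ×ˢ C).indicator (1 : X × X → ℝ) (x, x') := indicator_nonneg (by simp) _
  unfold bbar
  nlinarith [mul_le_mul_of_nonneg_left hsub hεb0.le, mul_nonneg (mul_pos hεb0 hφ1).le hind]

/-- Lemma 5.3 (iii): the bivariate drift inequality on all of `X × X`. -/
theorem statement10 {X : Type*} [MeasurableSpace X]
    (P : ℕ → Kernel X X) (hP : ∀ k, IsMarkovKernel (P k))
    (C : Set X) (hC : MeasurableSet C)
    (V : X → ℝ) (hVmeas : Measurable V) (hV1 : ∀ x, 1 ≤ V x)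
    (φ : ℝ → ℝ)
    (hφconc : ConcaveOn ℝ (Set.Ici 1) φ)
    (hφmono : MonotoneOn φ (Set.Ici 1))
    (hφdiff : ∀ t, 1 ≤ t → DifferentiableAt ℝ φ t)
    (hφpos : ∀ t, 1 ≤ t → 0 < φ t)
    (hφderiv0 : Tendsto (deriv φ) atTop (nhds 0))
    (ν : ℕ → Measure X) (hν : ∀ k, IsProbabilityMeasure (ν k))
    (εν εb : ℝ) (hεν : εν ∈ Set.Ioo (0:ℝ) 1) (hεb : εb ∈ Set.Ioo (0:ℝ) 1)
    (bV cV : ℝ)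
    (hVint : ∀ k, 1 ≤ k → ∀ x, Integrable V (P k x))
    (hdrift : ∀ k, 1 ≤ k → ∀ x,
      ∫ y, V y ∂(P k x) ≤ V x - φ (V x) + bV * C.indicator 1 x)
    (hminor : ∀ k, 1 ≤ k → ∀ x ∈ C, ∀ A : Set X, MeasurableSet A →
      ENNReal.ofReal εν * ν k A ≤ P k x A)
    (hout : ∀ x ∉ C, bV / (1 - εb) ≤ φ (V x))
    (hin : ∀ x ∈ C, V x ≤ cV) :
    ∀ k, 1 ≤ k → ∀ x x' : X,
      (∫ y, V y ∂(P k x)) + (∫ y, V y ∂(P k x')) - 1 ≤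
        (V x + V x' - 1) - εb * φ (V x + V x' - 1) +
          bbar φ εb bV * Set.indicator (C ×ˢ C) 1 (x, x') :=
  statement10_general P C V hV1 φ hφconc hφpos εb hεb bV hdrift hout
end

section
/- Let φ : [1,∞) → (0,∞) be concave, non-decreasing and differentiable, let ε_b ∈ (0,1), and assume H_φ(t) → ∞ as t → ∞ (so H_φ^{-1} is defined on [0,∞)). Then the sequence r(n) = φ(H_φ^{-1}(ε_b n))/φ(1) is non-decreasing and log-subadditive: r(n + m) ≤ r(n) · r(m) for all n, m ≥ 0. -/
open MeasureTheory ProbabilityTheory Filter Set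

/-!
Since `(H⁻¹)' = φ ∘ H⁻¹`, the function `g = log ∘ φ ∘ H⁻¹` has derivative `φ' ∘ H⁻¹`, which is
non-increasing because `φ` is concave and `H⁻¹` is increasing. Hence `g` is concave on `[0, ∞)`,
so `g (u + v) + g 0 ≤ g u + g v`; as `H⁻¹ 0 = 1`, exponentiating gives `r (n + m) ≤ r n * r m`.
Monotonicity of `r` is that of `φ` and `H⁻¹`.
-/

open Topology Real

theorem ConcaveOn.map_add_add_map_zero_le {f : ℝ → ℝ} (hf : ConcaveOn ℝ (Ici 0) f)
    {u v : ℝ} (hu : 0 ≤ u) (hv : 0 ≤ v) : f (u + v) + f 0 ≤ f u + f v := by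
  rcases (add_nonneg hu hv).eq_or_lt with h | h
  · obtain ⟨rfl, rfl⟩ : u = 0 ∧ v = 0 := ⟨by linarith, by linarith⟩
    simp
  -- `a` is the convex combination of `0` and `u + v` with weights `b / (u + v)`, `a / (u + v)`.
  have hcomb : ∀ a b : ℝ, 0 ≤ a → 0 ≤ b → a + b = u + v →
      b / (u + v) * f 0 + a / (u + v) * f (u + v) ≤ f a := by
    intro a b ha hb hab
    have := hf.2 (self_mem_Ici (a := (0 : ℝ))) (mem_Ici.2 h.le) (by positivity : 0 ≤ b / (u + v))
      (by positivity : 0 ≤ a / (u + v)) (by field_simp; linarith)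
    simpa [div_mul_cancel₀ _ h.ne'] using this
  have hu' := hcomb u v hu hv rfl
  have hv' := hcomb v u hv hu (add_comm v u)
  have hsum : (v / (u + v) + u / (u + v)) * (f 0 + f (u + v)) = f 0 + f (u + v) := by
    rw [← add_div, add_comm v u, div_self h.ne', one_mul]
  linarith

section Hfun

variable {φ : ℝ → ℝ}

@[simp]
theorem Hfun_one : Hfun φ 1 = 0 := intervalIntegral.integral_same

theorem intervalIntegrable_inv (hφ : ContinuousOn φ (Ici 1)) (hpos : ∀ t, 1 ≤ t → 0 < φ t)
    {a b : ℝ} (ha : 1 ≤ a) (hb : 1 ≤ b) : IntervalIntegrable (fun s => (φ s)⁻¹) volume a b :=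
  ((hφ.inv₀ fun t ht => (hpos t ht).ne').mono fun _ hx =>
    (le_min ha hb).trans hx.1).intervalIntegrable

theorem Hfun_sub_Hfun (hφ : ContinuousOn φ (Ici 1)) (hpos : ∀ t, 1 ≤ t → 0 < φ t)
    {a b : ℝ} (ha : 1 ≤ a) (hb : 1 ≤ b) : Hfun φ b - Hfun φ a = ∫ s in a..b, (φ s)⁻¹ :=
  intervalIntegral.integral_interval_sub_left (intervalIntegrable_inv hφ hpos le_rfl hb)
    (intervalIntegrable_inv hφ hpos le_rfl ha)

theorem strictMonoOn_Hfun (hφ : ContinuousOn φ (Ici 1)) (hpos : ∀ t, 1 ≤ t → 0 < φ t) :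
    StrictMonoOn (Hfun φ) (Ici 1) := by
  intro a ha b hb hab
  rw [← sub_pos, Hfun_sub_Hfun hφ hpos ha hb]
  exact intervalIntegral.intervalIntegral_pos_of_pos_on (intervalIntegrable_inv hφ hpos ha hb)
    (fun x hx => inv_pos.2 (hpos x (ha.trans hx.1.le))) hab

theorem hasDerivAt_Hfun (hφ : ContinuousOn φ (Ici 1)) (hpos : ∀ t, 1 ≤ t → 0 < φ t)
    {t : ℝ} (ht : 1 < t) : HasDerivAt (Hfun φ) (φ t)⁻¹ t := by
  have hcont : ContinuousOn (fun s => (φ s)⁻¹) (Ioi 1) :=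
    (hφ.inv₀ fun t ht => (hpos t ht).ne').mono Ioi_subset_Ici_self
  exact intervalIntegral.integral_hasDerivAt_right (intervalIntegrable_inv hφ hpos le_rfl ht.le)
    (hcont.stronglyMeasurableAtFilter isOpen_Ioi t ht) (hcont.continuousAt (Ioi_mem_nhds ht))

theorem surjOn_Hfun (hφ : ContinuousOn φ (Ici 1)) (hpos : ∀ t, 1 ≤ t → 0 < φ t)
    (hH : Tendsto (Hfun φ) atTop atTop) : SurjOn (Hfun φ) (Ici 1) (Ici 0) := by
  intro u (hu : 0 ≤ u)
  obtain ⟨T, huT, hT⟩ := ((hH.eventually_ge_atTop u).and (eventually_ge_atTop 1)).exists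
  have hcont : ContinuousOn (Hfun φ) (Icc 1 T) := by
    have := intervalIntegral.continuousOn_primitive_interval'
      (intervalIntegrable_inv hφ hpos le_rfl hT) left_mem_uIcc
    rwa [uIcc_of_le hT] at this
  obtain ⟨t, ht, rfl⟩ := intermediate_value_Icc hT hcont ⟨by simpa using hu, huT⟩
  exact ⟨t, ht.1, rfl⟩

end Hfun

section Hinv

variable {φ : ℝ → ℝ}

theorem Hfun_Hinv (hs : SurjOn (Hfun φ) (Ici 1) (Ici 0)) {u : ℝ} (hu : 0 ≤ u) :
    Hfun φ (Hinv φ u) = u :=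
  hs.rightInvOn_invFunOn hu

theorem one_le_Hinv (hs : SurjOn (Hfun φ) (Ici 1) (Ici 0)) {u : ℝ} (hu : 0 ≤ u) :
    1 ≤ Hinv φ u :=
  hs.mapsTo_invFunOn hu

theorem Hinv_Hfun (hmono : StrictMonoOn (Hfun φ) (Ici 1)) {t : ℝ} (ht : 1 ≤ t) :
    Hinv φ (Hfun φ t) = t :=
  hmono.injOn.leftInvOn_invFunOn ht

theorem Hinv_zero (hmono : StrictMonoOn (Hfun φ) (Ici 1)) : Hinv φ 0 = 1 := by
  simpa using Hinv_Hfun hmono le_rfl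

theorem Hfun_nonneg (hmono : StrictMonoOn (Hfun φ) (Ici 1)) {t : ℝ} (ht : 1 ≤ t) :
    0 ≤ Hfun φ t := by
  simpa using hmono.monotoneOn self_mem_Ici ht ht

theorem image_Hinv (hs : SurjOn (Hfun φ) (Ici 1) (Ici 0)) (hmono : StrictMonoOn (Hfun φ) (Ici 1)) :
    Hinv φ '' Ici 0 = Ici 1 :=
  (hs.mapsTo_invFunOn.image_subset).antisymm fun t ht =>
    ⟨Hfun φ t, Hfun_nonneg hmono ht, Hinv_Hfun hmono ht⟩

theorem strictMonoOn_Hinv (hs : SurjOn (Hfun φ) (Ici 1) (Ici 0))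
    (hmono : StrictMonoOn (Hfun φ) (Ici 1)) : StrictMonoOn (Hinv φ) (Ici 0) := by
  intro u hu v hv huv
  rwa [← hmono.lt_iff_lt (one_le_Hinv hs hu) (one_le_Hinv hs hv), Hfun_Hinv hs hu, Hfun_Hinv hs hv]

theorem one_lt_Hinv (hs : SurjOn (Hfun φ) (Ici 1) (Ici 0)) (hmono : StrictMonoOn (Hfun φ) (Ici 1))
    {u : ℝ} (hu : 0 < u) : 1 < Hinv φ u := by
  simpa [Hinv_zero hmono] using strictMonoOn_Hinv hs hmono self_mem_Ici (mem_Ici.2 hu.le) hu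

theorem continuousOn_Hinv (hs : SurjOn (Hfun φ) (Ici 1) (Ici 0))
    (hmono : StrictMonoOn (Hfun φ) (Ici 1)) : ContinuousOn (Hinv φ) (Ici 0) := by
  have hSM := strictMonoOn_Hinv hs hmono
  intro u (hu : 0 ≤ u)
  rcases hu.eq_or_lt with rfl | hu
  · refine hSM.continuousWithinAt_right_of_surjOn self_mem_nhdsWithin ?_
    rw [SurjOn, image_Hinv hs hmono, Hinv_zero hmono]
    exact Ioi_subset_Ici_self
  · refine (hSM.continuousAt_of_image_mem_nhds (Ici_mem_nhds hu) ?_).continuousWithinAt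
    rw [image_Hinv hs hmono]
    exact Ici_mem_nhds (one_lt_Hinv hs hmono hu)

theorem hasDerivAt_Hinv (hφ : ContinuousOn φ (Ici 1)) (hpos : ∀ t, 1 ≤ t → 0 < φ t)
    (hH : Tendsto (Hfun φ) atTop atTop) {u : ℝ} (hu : 0 < u) :
    HasDerivAt (Hinv φ) (φ (Hinv φ u)) u := by
  have hs := surjOn_Hfun hφ hpos hH
  have hmono := strictMonoOn_Hfun hφ hpos
  have hinv : ∀ᶠ y in 𝓝 u, Hfun φ (Hinv φ y) = y :=
    eventually_of_mem (Ioi_mem_nhds hu) fun y hy => Hfun_Hinv hs (le_of_lt hy)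
  have ht := one_lt_Hinv hs hmono hu
  simpa using HasDerivAt.of_local_left_inverse
    ((continuousOn_Hinv hs hmono).continuousAt (Ici_mem_nhds hu))
    (hasDerivAt_Hfun hφ hpos ht) (inv_ne_zero (hpos _ ht.le).ne') hinv

end Hinv

section Rate

variable {φ : ℝ → ℝ}

theorem hasDerivAt_log_comp_Hinv (hφ : ContinuousOn φ (Ici 1)) (hpos : ∀ t, 1 ≤ t → 0 < φ t)
    (hH : Tendsto (Hfun φ) atTop atTop) {u : ℝ} (hu : 0 < u)
    (hdiff : DifferentiableAt ℝ φ (Hinv φ u)) :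
    HasDerivAt (fun x => log (φ (Hinv φ x))) (deriv φ (Hinv φ u)) u := by
  have hφu := hpos _ (one_le_Hinv (surjOn_Hfun hφ hpos hH) hu.le)
  have h := (hdiff.hasDerivAt.comp u (hasDerivAt_Hinv hφ hpos hH hu)).log hφu.ne'
  rwa [Function.comp_apply, mul_div_cancel_right₀ _ hφu.ne'] at h

theorem concaveOn_log_comp_Hinv (hconc : ConcaveOn ℝ (Ici 1) φ)
    (hdiff : ∀ t, 1 ≤ t → DifferentiableAt ℝ φ t) (hpos : ∀ t, 1 ≤ t → 0 < φ t)
    (hH : Tendsto (Hfun φ) atTop atTop) :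
    ConcaveOn ℝ (Ici 0) (fun u => log (φ (Hinv φ u))) := by
  have hφ : ContinuousOn φ (Ici 1) := fun t ht => (hdiff t ht).continuousAt.continuousWithinAt
  have hs := surjOn_Hfun hφ hpos hH
  have hmono := strictMonoOn_Hfun hφ hpos
  have hderiv : ∀ u ∈ Ioi (0 : ℝ),
      HasDerivAt (fun x => log (φ (Hinv φ x))) (deriv φ (Hinv φ u)) u := fun u hu =>
    hasDerivAt_log_comp_Hinv hφ hpos hH hu (hdiff _ (one_le_Hinv hs (le_of_lt hu)))
  refine AntitoneOn.concaveOn_of_deriv (convex_Ici 0) ?_ ?_ ?_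
  · exact (hφ.comp (continuousOn_Hinv hs hmono) fun u hu => one_le_Hinv hs hu).log
      fun u hu => (hpos _ (one_le_Hinv hs hu)).ne'
  · rw [interior_Ici]
    exact fun u hu => (hderiv u hu).differentiableAt.differentiableWithinAt
  · rw [interior_Ici]
    intro u hu v hv huv
    rw [(hderiv u hu).deriv, (hderiv v hv).deriv]
    exact hconc.antitoneOn_deriv hdiff (one_le_Hinv hs (le_of_lt hu))
      (one_le_Hinv hs (le_of_lt hv))
      ((strictMonoOn_Hinv hs hmono).monotoneOn (mem_Ici.2 (le_of_lt hu))
        (mem_Ici.2 (le_of_lt hv)) huv)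

theorem monotone_rate (hφmono : MonotoneOn φ (Ici 1)) (hφ : ContinuousOn φ (Ici 1))
    (hpos : ∀ t, 1 ≤ t → 0 < φ t) (hH : Tendsto (Hfun φ) atTop atTop) {εb : ℝ} (hεb : 0 ≤ εb) :
    Monotone (fun n : ℕ => rate φ εb n) := by
  have hs := surjOn_Hfun hφ hpos hH
  intro n m hnm
  have hn : 0 ≤ εb * n := by positivity
  have hnm' : εb * n ≤ εb * m := by gcongr
  refine div_le_div_of_nonneg_right ?_ (hpos 1 le_rfl).le
  exact hφmono (one_le_Hinv hs hn) (one_le_Hinv hs (hn.trans hnm'))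
    ((strictMonoOn_Hinv hs (strictMonoOn_Hfun hφ hpos)).monotoneOn hn (hn.trans hnm') hnm')

theorem rate_add_le (hconc : ConcaveOn ℝ (Ici 1) φ)
    (hdiff : ∀ t, 1 ≤ t → DifferentiableAt ℝ φ t) (hpos : ∀ t, 1 ≤ t → 0 < φ t)
    (hH : Tendsto (Hfun φ) atTop atTop) {εb : ℝ} (hεb : 0 ≤ εb) (n m : ℕ) :
    rate φ εb (n + m) ≤ rate φ εb n * rate φ εb m := by
  have hφ : ContinuousOn φ (Ici 1) := fun t ht => (hdiff t ht).continuousAt.continuousWithinAt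
  have hs := surjOn_Hfun hφ hpos hH
  have hφ1 := hpos 1 le_rfl
  have hn : 0 ≤ εb * n := by positivity
  have hm : 0 ≤ εb * m := by positivity
  have hpos' : ∀ {u : ℝ}, 0 ≤ u → 0 < φ (Hinv φ u) := fun hu => hpos _ (one_le_Hinv hs hu)
  have hlog := (concaveOn_log_comp_Hinv hconc hdiff hpos hH).map_add_add_map_zero_le hn hm
  simp only [Hinv_zero (strictMonoOn_Hfun hφ hpos)] at hlog
  have hmul : φ (Hinv φ (εb * n + εb * m)) * φ 1 ≤ φ (Hinv φ (εb * n)) * φ (Hinv φ (εb * m)) := by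
    rwa [← log_le_log_iff (mul_pos (hpos' (add_nonneg hn hm)) hφ1) (mul_pos (hpos' hn) (hpos' hm)),
      log_mul (hpos' (add_nonneg hn hm)).ne' hφ1.ne', log_mul (hpos' hn).ne' (hpos' hm).ne']
  simp only [rate, Nat.cast_add, mul_add]
  rw [div_mul_div_comm, div_le_div_iff₀ hφ1 (by positivity)]
  linarith [mul_le_mul_of_nonneg_right hmul hφ1.le]

end Rate

/-- Lemma 5.4 (i): the rate sequence is non-decreasing and log-subadditive. -/
theorem statement12 (φ : ℝ → ℝ)
    (hφconc : ConcaveOn ℝ (Set.Ici 1) φ)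
    (hφmono : MonotoneOn φ (Set.Ici 1))
    (hφdiff : ∀ t, 1 ≤ t → DifferentiableAt ℝ φ t)
    (hφpos : ∀ t, 1 ≤ t → 0 < φ t)
    (hH : Tendsto (Hfun φ) atTop atTop)
    (εb : ℝ) (hεb : εb ∈ Set.Ioo (0:ℝ) 1) :
    Monotone (fun n : ℕ => rate φ εb n) ∧
    ∀ n m : ℕ, rate φ εb (n + m) ≤ rate φ εb n * rate φ εb m := by
  have hφcont : ContinuousOn φ (Ici 1) := fun t ht =>
    (hφdiff t ht).continuousAt.continuousWithinAt
  exact ⟨monotone_rate hφmono hφcont hφpos hH hεb.1.le,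
    rate_add_le hφconc hφdiff hφpos hH hεb.1.le⟩
end

section
/- Let (X_n)_{n≥0} be a stochastic process on a measurable space (X, 𝓑(X)) adapted to the filtration 𝓕_n = σ(X_0, …, X_n). Suppose (Z_n)_{n≥0} is a non-negative 𝓕_n-adapted process, (f_n)_{n≥0} and (s_n)_{n≥0} are sequences of non-negative measurable functions on X, and E[Z_{n+1} | 𝓕_n] ≤ Z_n − f_n(X_n) + s_n(X_n) almost surely for all n ≥ 0. Then for any initial condition X_0 = x and any 𝓕_n-stopping time τ: E_x[ Σ_{k=0}^{τ−1} f_k(X_k) ] ≤ Z_0(x) + E_x[ Σ_{k=0}^{τ−1} s_k(X_k) ]. -/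
/-!
Put `A k = {k < τ}`, an `𝓕 k`-measurable set. Integrating the drift inequality over `A k` and
replacing `E[Z (k+1) | 𝓕 k]` by `Z (k+1)` there (defining property of the conditional
expectation) gives, since `A (k+1) ⊆ A k` and `Z ≥ 0`,
`∫_{A k} f k + ∫_{A (k+1)} Z (k+1) ≤ ∫_{A k} Z k + ∫_{A k} s k`.
Summing over `k` telescopes. Lower Lebesgue integrals in `ℝ≥0∞` keep every term meaningful even
when the sums are infinite.
-/

open MeasureTheory
open scoped ENNReal

namespace ENNReal

theorem sum_range_add_le_of_forall_add_succ_le {F S B : ℕ → ℝ≥0∞}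
    (h : ∀ k, F k + B (k + 1) ≤ B k + S k) (N : ℕ) :
    ∑ k ∈ Finset.range N, F k + B N ≤ B 0 + ∑ k ∈ Finset.range N, S k := by
  induction N with
  | zero => simp
  | succ N ih =>
    calc ∑ k ∈ Finset.range (N + 1), F k + B (N + 1)
        = ∑ k ∈ Finset.range N, F k + (F N + B (N + 1)) := by
          rw [Finset.sum_range_succ, add_assoc]
      _ ≤ ∑ k ∈ Finset.range N, F k + (B N + S N) := add_le_add le_rfl (h N)
      _ = (∑ k ∈ Finset.range N, F k + B N) + S N := by ring
      _ ≤ (B 0 + ∑ k ∈ Finset.range N, S k) + S N := by gcongr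
      _ = B 0 + ∑ k ∈ Finset.range (N + 1), S k := by rw [Finset.sum_range_succ, add_assoc]

theorem tsum_le_add_tsum_of_forall_add_succ_le {F S B : ℕ → ℝ≥0∞}
    (h : ∀ k, F k + B (k + 1) ≤ B k + S k) :
    ∑' k, F k ≤ B 0 + ∑' k, S k := by
  rw [ENNReal.tsum_eq_iSup_nat]
  refine iSup_le fun N => ?_
  calc ∑ k ∈ Finset.range N, F k
      ≤ ∑ k ∈ Finset.range N, F k + B N := le_self_add
    _ ≤ B 0 + ∑ k ∈ Finset.range N, S k := sum_range_add_le_of_forall_add_succ_le h N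
    _ ≤ B 0 + ∑' k, S k := by gcongr; exact ENNReal.sum_le_tsum _

end ENNReal

section

variable {Ω : Type*} {m₀ : MeasurableSpace Ω} {μ : Measure Ω}

theorem setLIntegral_ofReal_condExp {m : MeasurableSpace Ω} (hm : m ≤ m₀)
    [SigmaFinite (μ.trim hm)] {f : Ω → ℝ} (hf : Integrable f μ) (hf_nonneg : 0 ≤ᵐ[μ] f)
    {s : Set Ω} (hs : MeasurableSet[m] s) :
    ∫⁻ ω in s, ENNReal.ofReal (μ[f|m] ω) ∂μ = ∫⁻ ω in s, ENNReal.ofReal (f ω) ∂μ := by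
  rw [← ofReal_integral_eq_lintegral_ofReal integrable_condExp.integrableOn
      (ae_restrict_of_ae (condExp_nonneg hf_nonneg)),
    ← ofReal_integral_eq_lintegral_ofReal hf.integrableOn (ae_restrict_of_ae hf_nonneg),
    setIntegral_condExp hm hf hs]

theorem setLIntegral_add_le_of_condExp_le {m : MeasurableSpace Ω} (hm : m ≤ m₀)
    [SigmaFinite (μ.trim hm)] {Z Z' g h : Ω → ℝ} (hZ : AEMeasurable Z μ)
    (hZ' : Integrable Z' μ) (hZ'_nonneg : 0 ≤ᵐ[μ] Z') (hg_nonneg : 0 ≤ g)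
    (hdrift : μ[Z'|m] ≤ᵐ[μ] fun ω => Z ω - g ω + h ω) {s : Set Ω} (hs : MeasurableSet[m] s) :
    ∫⁻ ω in s, ENNReal.ofReal (g ω) ∂μ + ∫⁻ ω in s, ENNReal.ofReal (Z' ω) ∂μ ≤
      ∫⁻ ω in s, ENNReal.ofReal (Z ω) ∂μ + ∫⁻ ω in s, ENNReal.ofReal (h ω) ∂μ := by
  have hcond_meas : Measurable[m₀] fun ω => ENNReal.ofReal (μ[Z'|m] ω) :=
    (stronglyMeasurable_condExp.mono hm).measurable.ennreal_ofReal
  rw [← setLIntegral_ofReal_condExp hm hZ' hZ'_nonneg hs,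
    ← lintegral_add_right _ hcond_meas, ← lintegral_add_left' hZ.ennreal_ofReal.restrict]
  refine lintegral_mono_ae (ae_restrict_of_ae ?_)
  filter_upwards [hdrift, condExp_nonneg hZ'_nonneg] with ω hω hcond_nonneg
  rw [← ENNReal.ofReal_add (hg_nonneg ω) hcond_nonneg]
  exact (ENNReal.ofReal_le_ofReal (by linarith)).trans ENNReal.ofReal_add_le

theorem lintegral_tsum_ite_lt_eq {τ : Ω → ℕ∞}
    (hτ : ∀ k : ℕ, MeasurableSet {ω | (k : ℕ∞) < τ ω}) {g : ℕ → Ω → ℝ≥0∞}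
    (hg : ∀ k, AEMeasurable (g k) μ) :
    ∫⁻ ω, ∑' k : ℕ, (if (k : ℕ∞) < τ ω then g k ω else 0) ∂μ =
      ∑' k : ℕ, ∫⁻ ω in {ω | (k : ℕ∞) < τ ω}, g k ω ∂μ := by
  have hite : ∀ (k : ℕ) ω, (if (k : ℕ∞) < τ ω then g k ω else 0) =
      {ω | (k : ℕ∞) < τ ω}.indicator (g k) ω := fun k ω => by
    simp only [Set.indicator_apply, Set.mem_ofPred_eq]
  simp_rw [hite]
  rw [lintegral_tsum fun k => (hg k).indicator (hτ k)]
  exact tsum_congr fun k => lintegral_indicator (hτ k) _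

end

theorem statement17_general {Ω : Type*} {X : Type*} [MeasurableSpace X]
    {m : MeasurableSpace Ω} (μ : Measure Ω) [IsProbabilityMeasure μ]
    (𝓕 : Filtration ℕ m)
    (Xp : ℕ → Ω → X) (hXadapted : ∀ n, Measurable[𝓕 n] (Xp n))
    (Z : ℕ → Ω → ℝ)
    (hZnonneg : ∀ n ω, 0 ≤ Z n ω) (hZint : ∀ n, Integrable (Z n) μ)
    (f s : ℕ → X → ℝ)
    (hfmeas : ∀ n, Measurable (f n)) (hsmeas : ∀ n, Measurable (s n))
    (hfnonneg : ∀ n x, 0 ≤ f n x)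
    (hcomp : ∀ n : ℕ,
      μ[Z (n + 1)|𝓕 n] ≤ᵐ[μ] fun ω => Z n ω - f n (Xp n ω) + s n (Xp n ω))
    (τ : Ω → ℕ∞) (hτ : ∀ n : ℕ, MeasurableSet[𝓕 n] {ω | τ ω ≤ n}) :
    ∫⁻ ω, ∑' k : ℕ,
        (if (k : ℕ∞) < τ ω then ENNReal.ofReal (f k (Xp k ω)) else 0) ∂μ ≤
      (∫⁻ ω, ENNReal.ofReal (Z 0 ω) ∂μ) +
        ∫⁻ ω, ∑' k : ℕ,
          (if (k : ℕ∞) < τ ω then ENNReal.ofReal (s k (Xp k ω)) else 0) ∂μ := by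
  set A : ℕ → Set Ω := fun k => {ω | (k : ℕ∞) < τ ω}
  have hA : ∀ k, MeasurableSet[𝓕 k] (A k) :=
    (show IsStoppingTime 𝓕 τ from hτ).measurableSet_gt
  have hA_anti : ∀ k, A (k + 1) ⊆ A k := fun k ω (hω : ((k + 1 : ℕ) : ℕ∞) < τ ω) =>
    show (k : ℕ∞) < τ ω from (Nat.cast_lt.2 k.lt_succ_self).trans hω
  have hobs_meas : ∀ g : ℕ → X → ℝ, (∀ k, Measurable (g k)) →
      ∀ k, AEMeasurable (fun ω => ENNReal.ofReal (g k (Xp k ω))) μ := fun g hg k =>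
    ((hg k).comp ((hXadapted k).mono (𝓕.le k) le_rfl)).ennreal_ofReal.aemeasurable
  have hstep : ∀ k, ∫⁻ ω in A k, ENNReal.ofReal (f k (Xp k ω)) ∂μ +
      ∫⁻ ω in A (k + 1), ENNReal.ofReal (Z (k + 1) ω) ∂μ ≤
      ∫⁻ ω in A k, ENNReal.ofReal (Z k ω) ∂μ + ∫⁻ ω in A k, ENNReal.ofReal (s k (Xp k ω)) ∂μ :=
    fun k => (add_le_add_right (lintegral_mono_set (hA_anti k)) _).trans <|
      setLIntegral_add_le_of_condExp_le (𝓕.le k) (hZint k).aemeasurable (hZint (k + 1))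
        (ae_of_all _ (hZnonneg (k + 1))) (fun ω => hfnonneg k (Xp k ω)) (hcomp k) (hA k)
  rw [lintegral_tsum_ite_lt_eq (fun k => 𝓕.le k _ (hA k)) (hobs_meas f hfmeas),
    lintegral_tsum_ite_lt_eq (fun k => 𝓕.le k _ (hA k)) (hobs_meas s hsmeas)]
  calc _ ≤ _ := ENNReal.tsum_le_add_tsum_of_forall_add_succ_le hstep
    _ ≤ _ := add_le_add (setLIntegral_le_lintegral _ _) le_rfl

/-- Proposition A.1 (comparison theorem, Meyn–Tweedie Prop. 11.3.2, stated for
inhomogeneous chains / general adapted processes). -/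
theorem statement17 {Ω : Type*} {X : Type*} [MeasurableSpace X]
    {m : MeasurableSpace Ω} (μ : Measure Ω) [IsProbabilityMeasure μ]
    (𝓕 : Filtration ℕ m)
    (Xp : ℕ → Ω → X) (hXadapted : ∀ n, Measurable[𝓕 n] (Xp n))
    (Z : ℕ → Ω → ℝ) (hZadapted : ∀ n, Measurable[𝓕 n] (Z n))
    (hZnonneg : ∀ n ω, 0 ≤ Z n ω) (hZint : ∀ n, Integrable (Z n) μ)
    (f s : ℕ → X → ℝ)
    (hfmeas : ∀ n, Measurable (f n)) (hsmeas : ∀ n, Measurable (s n))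
    (hfnonneg : ∀ n x, 0 ≤ f n x) (hsnonneg : ∀ n x, 0 ≤ s n x)
    (hcomp : ∀ n : ℕ,
      μ[Z (n + 1)|𝓕 n] ≤ᵐ[μ] fun ω => Z n ω - f n (Xp n ω) + s n (Xp n ω))
    (τ : Ω → ℕ∞) (hτ : ∀ n : ℕ, MeasurableSet[𝓕 n] {ω | τ ω ≤ n}) :
    ∫⁻ ω, ∑' k : ℕ,
        (if (k : ℕ∞) < τ ω then ENNReal.ofReal (f k (Xp k ω)) else 0) ∂μ ≤
      (∫⁻ ω, ENNReal.ofReal (Z 0 ω) ∂μ) +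
        ∫⁻ ω, ∑' k : ℕ,
          (if (k : ℕ∞) < τ ω then ENNReal.ofReal (s k (Xp k ω)) else 0) ∂μ :=
  statement17_general μ 𝓕 Xp hXadapted Z hZnonneg hZint f s hfmeas hsmeas hfnonneg hcomp τ hτ
end
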